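/- arXiv:2601.19828 — 2 statements merged into one kernel-verified Lean document; each statement's English description precedes it below -/
import Mathlib

section
/- Let H be a real Hilbert space with inner product ⟨·,·⟩ and norm ‖·‖, let q ∈ ℕ, let N ≥ 1, and let 0 = t_0 < t_1 < … < t_N = T be a partition of [0,T]. For each n ∈ {1,…,N} let v_n be an H-valued polynomial of degree at most q. Then Σ_{n=1}^{N} ∫_{t_{n−1}}^{t_n} ⟨v_n'(t), v_n(t)⟩ dt + Σ_{n=1}^{N−1} ⟨v_{n+1}(t_n) − v_n(t_n), v_{n+1}(t_n)⟩ + ‖v_1(0)‖² = (1/2) ( ‖v_N(T)‖² + Σ_{n=1}^{N−1} ‖v_{n+1}(t_n) − v_n(t_n)‖² + ‖v_1(0)‖² ). -/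
open MeasureTheory Set RealInnerProductSpace

/-- An `H`-valued polynomial of degree at most `q`:
`t ↦ ∑_{i=0}^{q} t^i • c i` with coefficients `c i ∈ H`. -/
def IsPolyDegLE (H : Type*) [AddCommGroup H] [Module ℝ H] (q : ℕ) (f : ℝ → H) : Prop :=
  ∃ c : Fin (q + 1) → H, ∀ t : ℝ, f t = ∑ i : Fin (q + 1), t ^ (i : ℕ) • c i

/-!
On each slab `⟪v', v⟫ = (d/dt ‖v‖²) / 2`, so the integrals contribute half the increments of
`‖v_n‖²`; at each node `⟪a - b, a⟫ = (‖a‖² - ‖b‖² + ‖a - b‖²) / 2`. The increments and the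
norm differences at the nodes telescope to `(‖v_N(T)‖² - ‖v_1(0)‖²) / 2`.
-/

theorem IsPolyDegLE.contDiff {H : Type*} [NormedAddCommGroup H] [NormedSpace ℝ H] {q : ℕ}
    {f : ℝ → H} (hf : IsPolyDegLE H q f) {k : WithTop ℕ∞} : ContDiff ℝ k f := by
  obtain ⟨c, hc⟩ := hf
  rw [funext hc]
  fun_prop

theorem ContDiff.integral_inner_deriv_self {H : Type*} [NormedAddCommGroup H]
    [InnerProductSpace ℝ H] {f : ℝ → H} (hf : ContDiff ℝ 1 f) (a b : ℝ) :
    ∫ s in a..b, ⟪deriv f s, f s⟫ = (‖f b‖ ^ 2 - ‖f a‖ ^ 2) / 2 := by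
  have hderiv : ∀ s ∈ uIcc a b, HasDerivAt (‖f ·‖ ^ 2) (2 * ⟪deriv f s, f s⟫) s := fun s _ => by
    simpa only [real_inner_comm] using ((hf.differentiable one_ne_zero) s).hasDerivAt.norm_sq
  have hint : IntervalIntegrable (fun s => 2 * ⟪deriv f s, f s⟫) volume a b :=
    (continuous_const.mul ((hf.continuous_deriv le_rfl).inner hf.continuous)).intervalIntegrable a b
  have hftc := intervalIntegral.integral_eq_sub_of_hasDerivAt hderiv hint
  rw [intervalIntegral.integral_const_mul] at hftc
  linarith

theorem real_inner_sub_self_left {H : Type*} [NormedAddCommGroup H] [InnerProductSpace ℝ H]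
    (x y : H) : ⟪x - y, x⟫ = (‖x‖ ^ 2 - ‖y‖ ^ 2 + ‖x - y‖ ^ 2) / 2 := by
  rw [norm_sub_sq_real, inner_sub_left, real_inner_self_eq_norm_sq, real_inner_comm]
  ring

theorem Finset.sum_Icc_sub_pred_add_sum_Icc_sub {G : Type*} [AddCommGroup G] (a b : ℕ → G)
    (M : ℕ) : ∑ n ∈ Icc 1 (M + 1), (a n - b (n - 1)) + ∑ n ∈ Icc 1 M, (b n - a n)
      = a (M + 1) - b 0 := by
  induction M with
  | zero => simp
  | succ M ih =>
    rw [sum_Icc_succ_top (by omega : 1 ≤ M + 1 + 1) (fun n => a n - b (n - 1)),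
      sum_Icc_succ_top (by omega : 1 ≤ M + 1) (fun n => b n - a n), ← sub_eq_zero,
      ← sub_eq_zero.mpr ih]
    simp only [Nat.add_sub_cancel]
    abel

theorem dg_time_derivative_identity_general (H : Type*) [NormedAddCommGroup H]
    [InnerProductSpace ℝ H] (q N : ℕ) (hN : 1 ≤ N) (T : ℝ)
    (t : ℕ → ℝ) (ht0 : t 0 = 0) (htN : t N = T)
    (v : ℕ → ℝ → H) (hv : ∀ n ∈ Finset.Icc 1 N, IsPolyDegLE H q (v n)) :
    (∑ n ∈ Finset.Icc 1 N, ∫ s in t (n - 1)..t n, ⟪deriv (v n) s, v n s⟫)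
      + (∑ n ∈ Finset.Icc 1 (N - 1), ⟪v (n + 1) (t n) - v n (t n), v (n + 1) (t n)⟫)
      + ‖v 1 0‖ ^ 2
    = (1 / 2) * (‖v N T‖ ^ 2
        + (∑ n ∈ Finset.Icc 1 (N - 1), ‖v (n + 1) (t n) - v n (t n)‖ ^ 2)
        + ‖v 1 0‖ ^ 2) := by
  obtain ⟨M, rfl⟩ : ∃ M, N = M + 1 := ⟨N - 1, by omega⟩
  set endVal : ℕ → ℝ := fun n => ‖v n (t n)‖ ^ 2
  set startVal : ℕ → ℝ := fun n => ‖v (n + 1) (t n)‖ ^ 2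
  have hslab : ∀ n ∈ Finset.Icc 1 (M + 1),
      ∫ s in t (n - 1)..t n, ⟪deriv (v n) s, v n s⟫ = (endVal n - startVal (n - 1)) / 2 := by
    intro n hn
    obtain ⟨m, rfl⟩ : ∃ m, n = m + 1 := ⟨n - 1, by grind⟩
    exact (hv _ hn).contDiff.integral_inner_deriv_self _ _
  have hjump : ∀ n ∈ Finset.Icc 1 M, ⟪v (n + 1) (t n) - v n (t n), v (n + 1) (t n)⟫
      = (startVal n - endVal n + ‖v (n + 1) (t n) - v n (t n)‖ ^ 2) / 2 :=
    fun n _ => real_inner_sub_self_left _ _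
  have htel := Finset.sum_Icc_sub_pred_add_sum_Icc_sub endVal startVal M
  rw [Nat.add_sub_cancel, Finset.sum_congr rfl hslab, Finset.sum_congr rfl hjump,
    ← Finset.sum_div, ← Finset.sum_div, Finset.sum_add_distrib]
  simp only [endVal, startVal, ht0, htN] at htel ⊢
  linarith

/-- Coercivity identity of the DG discretization of the first-order time derivative, tested
with the piecewise polynomial itself: for a partition `0 = t_0 < … < t_N = T` and `H`-valued
polynomials `v_1, …, v_N` of degree at most `q`,
`∑_{n=1}^{N} ∫_{t_{n−1}}^{t_n} ⟨v_n', v_n⟩ + ∑_{n=1}^{N−1} ⟨v_{n+1}(t_n) − v_n(t_n), v_{n+1}(t_n)⟩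
  + ‖v_1(0)‖² = (1/2)(‖v_N(T)‖² + ∑_{n=1}^{N−1} ‖v_{n+1}(t_n) − v_n(t_n)‖² + ‖v_1(0)‖²)`. -/
theorem dg_time_derivative_identity (H : Type*) [NormedAddCommGroup H]
    [InnerProductSpace ℝ H] [CompleteSpace H] (q N : ℕ) (hN : 1 ≤ N) (T : ℝ)
    (t : ℕ → ℝ) (ht0 : t 0 = 0) (htN : t N = T) (hmono : ∀ n < N, t n < t (n + 1))
    (v : ℕ → ℝ → H) (hv : ∀ n ∈ Finset.Icc 1 N, IsPolyDegLE H q (v n)) :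
    (∑ n ∈ Finset.Icc 1 N, ∫ s in t (n - 1)..t n, ⟪deriv (v n) s, v n s⟫)
      + (∑ n ∈ Finset.Icc 1 (N - 1), ⟪v (n + 1) (t n) - v n (t n), v (n + 1) (t n)⟫)
      + ‖v 1 0‖ ^ 2
    = (1 / 2) * (‖v N T‖ ^ 2
        + (∑ n ∈ Finset.Icc 1 (N - 1), ‖v (n + 1) (t n) - v n (t n)‖ ^ 2)
        + ‖v 1 0‖ ^ 2) :=
  dg_time_derivative_identity_general H q N hN T t ht0 htN v hv
end

section
/- Let H be a real Hilbert space with inner product ⟨·,·⟩ and norm ‖·‖, and let q ∈ ℕ. There exists a constant C > 0 depending only on q with the following property: for all a < b, every continuous function v : [a,b] → H, and every H-valued polynomial p of degree at most q satisfying p(b) = v(b) and ∫_a^b ⟨v(t) − p(t), w(t)⟩ dt = 0 for every H-valued polynomial w of degree at most q − 1 (this orthogonality condition is vacuous when q = 0), one has sup_{t ∈ [a,b]} ‖p(t)‖ ≤ C sup_{t ∈ [a,b]} ‖v(t)‖. -/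
open MeasureTheory Set RealInnerProductSpace

/-- An `H`-valued polynomial of degree at most `q - 1` (i.e. with `q` coefficients);
for `q = 0` only the zero polynomial qualifies, so conditions quantified over such
polynomials are vacuous. -/
def IsPolyDegLT (H : Type*) [AddCommGroup H] [Module ℝ H] (q : ℕ) (f : ℝ → H) : Prop :=
  ∃ c : Fin q → H, ∀ t : ℝ, f t = ∑ i : Fin q, t ^ (i : ℕ) • c i


/-!
Rescale `[a, b]` to `[0, 1]`. Testing against `h : H` turns `p` into the real polynomial
`t ↦ ⟪p t, h⟫` of degree `≤ q`, which is determined by its value at `1` and its moments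
against `1, s, …, s ^ (q - 1)`; these data are bounded by `sup ‖v‖ * ‖h‖`. The data map is an
injective linear map on the `(q + 1)`-dimensional coefficient space, hence bounded below, so the
coefficients and then `|⟪p s, h⟫|` are bounded by a multiple of `sup ‖v‖ * ‖h‖`. Injectivity:
if `P(1) = 0` and all moments vanish, write `P = (X - 1) Q` with `deg Q < q`; then
`0 = ∫₀¹ Q P = -∫₀¹ (1 - t) Q(t)²`, so `Q = 0`.
-/
open Polynomial Matrix

section Reparametrization

variable {H : Type*} [AddCommGroup H] [Module ℝ H]

theorem exists_sum_pow_smul_comp_affine {n : ℕ} (c : Fin n → H) (α β : ℝ) :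
    ∃ c' : Fin n → H, ∀ s : ℝ,
      ∑ i : Fin n, (α + β * s) ^ (i : ℕ) • c i = ∑ k : Fin n, s ^ (k : ℕ) • c' k := by
  refine ⟨fun k => ∑ i : Fin n, ((C β * X + C α) ^ (i : ℕ)).coeff k • c i, fun s => ?_⟩
  simp_rw [Finset.smul_sum, smul_smul]
  rw [Finset.sum_comm]
  refine Finset.sum_congr rfl fun i _ => ?_
  rw [← Finset.sum_smul]
  congr 1
  have hdeg : ((C β * X + C α) ^ (i : ℕ)).natDegree < n :=
    (natDegree_pow_le_of_le _ natDegree_linear_le).trans_lt (by simp)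
  have heval : (α + β * s) ^ (i : ℕ) = ((C β * X + C α) ^ (i : ℕ)).eval s := by
    simp [add_comm]
  rw [heval, eval_eq_sum_range' hdeg, Finset.sum_range]
  exact Finset.sum_congr rfl fun k _ => mul_comm _ _

theorem IsPolyDegLE.comp_affine {q : ℕ} {f : ℝ → H} (hf : IsPolyDegLE H q f) (α β : ℝ) :
    IsPolyDegLE H q (fun s => f (α + β * s)) := by
  obtain ⟨c, hc⟩ := hf
  obtain ⟨c', hc'⟩ := exists_sum_pow_smul_comp_affine c α β
  exact ⟨c', fun s => (hc _).trans (hc' s)⟩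

theorem IsPolyDegLT.comp_affine {q : ℕ} {f : ℝ → H} (hf : IsPolyDegLT H q f) (α β : ℝ) :
    IsPolyDegLT H q (fun s => f (α + β * s)) := by
  obtain ⟨c, hc⟩ := hf
  obtain ⟨c', hc'⟩ := exists_sum_pow_smul_comp_affine c α β
  exact ⟨c', fun s => (hc _).trans (hc' s)⟩

theorem isPolyDegLT_pow_smul {q j : ℕ} (hj : j < q) (h : H) :
    IsPolyDegLT H q (fun s => s ^ j • h) :=
  ⟨Pi.single ⟨j, hj⟩ h, fun s => by simp [Pi.single_apply]⟩

end Reparametrization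

namespace Polynomial

theorem integral_mul_eq_zero_of_moments {P Q : ℝ[X]} {q : ℕ}
    (hP : ∀ k < q, ∫ t in (0 : ℝ)..1, t ^ k * P.eval t = 0) (hQ : Q.natDegree < q) :
    ∫ t in (0 : ℝ)..1, Q.eval t * P.eval t = 0 := by
  simp_rw [eval_eq_sum_range' hQ, Finset.sum_mul, mul_assoc]
  rw [intervalIntegral.integral_finsetSum fun k _ => by
    exact (continuous_const.mul ((continuous_pow k).mul P.continuous)).intervalIntegrable _ _]
  refine Finset.sum_eq_zero fun k hk => ?_
  rw [intervalIntegral.integral_const_mul, hP k (Finset.mem_range.1 hk), mul_zero]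

theorem integral_one_sub_mul_sq_pos {Q : ℝ[X]} (hQ : Q ≠ 0) :
    0 < ∫ t in (0 : ℝ)..1, (1 - t) * Q.eval t ^ 2 := by
  refine intervalIntegral.integral_pos zero_lt_one (by fun_prop) ?_ ?_
  · intro t ht
    exact mul_nonneg (by linarith [ht.2]) (sq_nonneg _)
  · obtain ⟨t, ⟨ht, ht1⟩, hroot⟩ :=
      ((Ico_infinite (zero_lt_one' ℝ)).sdiff (finite_setOfPred_isRoot hQ)).nonempty
    exact ⟨t, ⟨ht, ht1.le⟩, mul_pos (by linarith) (sq_pos_of_ne_zero hroot)⟩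

theorem eq_zero_of_eval_one_of_moments {P : ℝ[X]} {q : ℕ} (hdeg : P.natDegree ≤ q)
    (h1 : P.eval 1 = 0) (hP : ∀ k < q, ∫ t in (0 : ℝ)..1, t ^ k * P.eval t = 0) : P = 0 := by
  by_contra hP0
  obtain ⟨Q, rfl⟩ := dvd_iff_isRoot.mpr h1
  have hQ0 : Q ≠ 0 := right_ne_zero_of_mul hP0
  have hQdeg : Q.natDegree < q := by
    rw [natDegree_mul (X_sub_C_ne_zero 1) hQ0, natDegree_X_sub_C] at hdeg
    omega
  have hpair : ∫ t in (0 : ℝ)..1, Q.eval t * ((X - C 1) * Q).eval t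
      = -∫ t in (0 : ℝ)..1, (1 - t) * Q.eval t ^ 2 := by
    rw [← intervalIntegral.integral_neg]
    congr 1
    funext t
    simp only [eval_mul, eval_sub, eval_X, eval_C]
    ring
  linarith [integral_mul_eq_zero_of_moments hP hQdeg, integral_one_sub_mul_sq_pos hQ0]

end Polynomial

/-- Row `j < q` holds the moments `∫₀¹ s ^ (i + j) ds`; the last row evaluates at `1`. -/
noncomputable def thomeeMatrix (q : ℕ) : Matrix (Fin (q + 1)) (Fin (q + 1)) ℝ :=
  Matrix.of fun j i => if (j : ℕ) < q then ((i : ℝ) + j + 1)⁻¹ else 1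

namespace thomeeMatrix

variable {q : ℕ} (x : Fin (q + 1) → ℝ)

theorem mulVec_of_lt {j : Fin (q + 1)} (hj : (j : ℕ) < q) :
    (thomeeMatrix q *ᵥ x) j =
      ∫ s in (0 : ℝ)..1, s ^ (j : ℕ) * ∑ i : Fin (q + 1), s ^ (i : ℕ) * x i := by
  simp_rw [Finset.mul_sum, ← mul_assoc, ← pow_add]
  rw [intervalIntegral.integral_finsetSum fun i _ => by
    exact ((continuous_pow _).mul continuous_const).intervalIntegrable _ _]
  simp only [Matrix.mulVec, dotProduct, thomeeMatrix, Matrix.of_apply, hj, if_true,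
    intervalIntegral.integral_mul_const, integral_pow]
  refine Finset.sum_congr rfl fun i _ => ?_
  push_cast
  simp [add_comm, div_eq_inv_mul]

theorem mulVec_of_not_lt {j : Fin (q + 1)} (hj : ¬(j : ℕ) < q) :
    (thomeeMatrix q *ᵥ x) j = ∑ i, x i := by
  simp [Matrix.mulVec, dotProduct, thomeeMatrix, hj]

theorem eq_zero_of_mulVec_eq_zero (hx : thomeeMatrix q *ᵥ x = 0) : x = 0 := by
  set P : ℝ[X] := ∑ i : Fin (q + 1), C (x i) * X ^ (i : ℕ)
  have heval : ∀ t, P.eval t = ∑ i : Fin (q + 1), t ^ (i : ℕ) * x i := fun t => by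
    simp only [P, eval_finsetSum, eval_mul, eval_C, eval_pow, eval_X]
    exact Finset.sum_congr rfl fun _ _ => mul_comm _ _
  have hdeg : P.natDegree ≤ q := natDegree_sum_le_of_forall_le _ _ fun i _ =>
    (natDegree_C_mul_X_pow_le _ _).trans (Nat.lt_succ_iff.mp i.isLt)
  have hP : P = 0 := by
    refine eq_zero_of_eval_one_of_moments hdeg ?_ fun k hk => ?_
    · simpa [heval, mulVec_of_not_lt x (j := Fin.last q) (by simp)] using congrFun hx (Fin.last q)
    · simpa [heval, mulVec_of_lt x (j := ⟨k, by omega⟩) hk] using congrFun hx ⟨k, by omega⟩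
  funext i
  simpa [P, finsetSum_coeff, coeff_C_mul_X_pow, Fin.val_inj] using congrArg (coeff · i) hP

end thomeeMatrix

theorem exists_abs_le_of_isPolyDegLE (q : ℕ) :
    ∃ C > 0, ∀ P : ℝ → ℝ, IsPolyDegLE ℝ q P → ∀ D : ℝ, |P 1| ≤ D →
      (∀ j < q, |∫ s in (0 : ℝ)..1, s ^ j * P s| ≤ D) → ∀ s ∈ Icc (0 : ℝ) 1, |P s| ≤ C * D := by
  obtain ⟨K, hK, hanti⟩ := (thomeeMatrix q).mulVecLin.exists_antilipschitzWith
    (ker_mulVecLin_eq_bot_iff.2 thomeeMatrix.eq_zero_of_mulVec_eq_zero)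
  refine ⟨(q + 1) * K, by positivity, fun P ⟨x, hx⟩ D h1 hmom s hs => ?_⟩
  simp only [smul_eq_mul] at hx
  have hdata : ‖thomeeMatrix q *ᵥ x‖ ≤ D := by
    refine (pi_norm_le_iff_of_nonneg ((abs_nonneg _).trans h1)).2 fun j => ?_
    by_cases hj : (j : ℕ) < q
    · simpa [thomeeMatrix.mulVec_of_lt x hj, ← hx] using hmom j hj
    · simpa [thomeeMatrix.mulVec_of_not_lt x hj, hx] using h1
  have hcoeff : ‖x‖ ≤ K * D :=
    (hanti.le_mul_norm (map_zero _) x).trans (by simpa using mul_le_mul_of_nonneg_left hdata K.2)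
  calc |P s| = |∑ i : Fin (q + 1), s ^ (i : ℕ) * x i| := by rw [hx]
    _ ≤ ∑ _i : Fin (q + 1), ‖x‖ := by
        refine (Finset.abs_sum_le_sum_abs _ _).trans (Finset.sum_le_sum fun i _ => ?_)
        rw [abs_mul, abs_pow]
        exact (mul_le_of_le_one_left (abs_nonneg _) (pow_le_one₀ (abs_nonneg _)
          (abs_le.2 ⟨by linarith [hs.1], hs.2⟩))).trans (norm_le_pi_norm x i)
    _ = (q + 1) * ‖x‖ := by simp
    _ ≤ (q + 1) * (K * D) := by gcongr
    _ = (q + 1) * K * D := by ring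

section InnerProductSpace

variable {H : Type*} [NormedAddCommGroup H] [InnerProductSpace ℝ H]

theorem IsPolyDegLE.continuous {q : ℕ} {p : ℝ → H} (hp : IsPolyDegLE H q p) : Continuous p := by
  obtain ⟨c, hc⟩ := hp
  rw [funext hc]
  fun_prop

theorem IsPolyDegLE.inner_const {q : ℕ} {p : ℝ → H} (hp : IsPolyDegLE H q p) (h : H) :
    IsPolyDegLE ℝ q (fun t => ⟪p t, h⟫) := by
  obtain ⟨c, hc⟩ := hp
  exact ⟨fun i => ⟪c i, h⟫, fun t => by simp [hc, sum_inner, real_inner_smul_left]⟩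

theorem integral_inner_pow_smul_comp_affine_eq_zero {q : ℕ} {a b : ℝ} (hab : a ≠ b) {f : ℝ → H}
    (horth : ∀ w : ℝ → H, IsPolyDegLT H q w → ∫ t in a..b, ⟪f t, w t⟫ = 0) {j : ℕ} (hj : j < q)
    (h : H) : ∫ s in (0 : ℝ)..1, ⟪f (a + (b - a) * s), s ^ j • h⟫ = 0 := by
  have hba : b - a ≠ 0 := sub_ne_zero.2 hab.symm
  set w : ℝ → H := fun t => (-(a / (b - a)) + (b - a)⁻¹ * t) ^ j • h
  have hw : IsPolyDegLT H q w := (isPolyDegLT_pow_smul hj h).comp_affine _ _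
  have hw_comp : ∀ s, w (a + (b - a) * s) = s ^ j • h := fun s => by
    simp only [w]
    congr
    field_simp
    ring
  calc ∫ s in (0 : ℝ)..1, ⟪f (a + (b - a) * s), s ^ j • h⟫
      = ∫ s in (0 : ℝ)..1, ⟪f (a + (b - a) * s), w (a + (b - a) * s)⟫ := by simp_rw [hw_comp]
    _ = (b - a)⁻¹ • ∫ t in a..b, ⟪f t, w t⟫ := by
        rw [intervalIntegral.integral_comp_add_mul (fun t => ⟪f t, w t⟫) hba]
        simp
    _ = 0 := by rw [horth w hw, smul_zero]

variable (H) in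
theorem exists_norm_le_of_thomee_unitInterval (q : ℕ) :
    ∃ C > 0, ∀ v p : ℝ → H, ContinuousOn v (Icc 0 1) → IsPolyDegLE H q p → p 1 = v 1 →
      (∀ j < q, ∀ h : H, ∫ s in (0 : ℝ)..1, ⟪v s - p s, s ^ j • h⟫ = 0) →
      ∀ S : ℝ, (∀ s ∈ Icc (0 : ℝ) 1, ‖v s‖ ≤ S) → ∀ s ∈ Icc (0 : ℝ) 1, ‖p s‖ ≤ C * S := by
  obtain ⟨C, hC, hbound⟩ := exists_abs_le_of_isPolyDegLE q
  refine ⟨C, hC, fun v p hv hp hp1 horth S hS s hs => ?_⟩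
  have hS0 : 0 ≤ S := (norm_nonneg _).trans (hS 0 (left_mem_Icc.2 zero_le_one))
  have hvh : ∀ h : H, ∀ t ∈ Icc (0 : ℝ) 1, |⟪v t, h⟫| ≤ S * ‖h‖ := fun h t ht =>
    (abs_real_inner_le_norm _ _).trans (by gcongr; exact hS t ht)
  have hmom : ∀ h : H, ∀ j < q,
      |∫ t in (0 : ℝ)..1, t ^ j * ⟪p t, h⟫| ≤ S * ‖h‖ := by
    intro h j hj
    have hvint : IntervalIntegrable (fun t => t ^ j * ⟪v t, h⟫) volume 0 1 :=
      ((continuous_pow j).continuousOn.mul (hv.inner continuousOn_const)).intervalIntegrable_of_Icc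
        zero_le_one
    have hpint : IntervalIntegrable (fun t => t ^ j * ⟪p t, h⟫) volume 0 1 :=
      ((continuous_pow j).mul (hp.continuous.inner continuous_const)).intervalIntegrable _ _
    have hsplit := horth j hj h
    simp_rw [real_inner_smul_right, inner_sub_left, mul_sub] at hsplit
    rw [intervalIntegral.integral_sub hvint hpint, sub_eq_zero] at hsplit
    have hbd : ∀ t ∈ uIoc (0 : ℝ) 1, ‖t ^ j * ⟪v t, h⟫‖ ≤ S * ‖h‖ := fun t ht => by
      rw [uIoc_of_le zero_le_one] at ht
      rw [Real.norm_eq_abs, abs_mul, abs_pow, abs_of_pos ht.1, ← one_mul (S * ‖h‖)]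
      exact mul_le_mul (pow_le_one₀ ht.1.le ht.2) (hvh h t ⟨ht.1.le, ht.2⟩) (abs_nonneg _)
        zero_le_one
    simpa [← hsplit] using intervalIntegral.norm_integral_le_of_norm_le_const hbd
  have hinner : ∀ h : H, |⟪p s, h⟫| ≤ C * S * ‖h‖ := fun h => by
    simpa [mul_assoc] using hbound _ (hp.inner_const h) _
      (by simpa [hp1] using hvh h 1 (right_mem_Icc.2 zero_le_one)) (hmom h) s hs
  rw [← innerSL_apply_norm ℝ]
  exact ContinuousLinearMap.opNorm_le_bound _ (by positivity) fun h => by simpa using hinner h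

end InnerProductSpace

theorem thomee_projection_stability_general (H : Type*) [NormedAddCommGroup H]
    [InnerProductSpace ℝ H] (q : ℕ) :
    ∃ C : ℝ, 0 < C ∧
      ∀ (a b : ℝ), a < b →
        ∀ v : ℝ → H, ContinuousOn v (Icc a b) →
          ∀ p : ℝ → H, IsPolyDegLE H q p → p b = v b →
            (∀ w : ℝ → H, IsPolyDegLT H q w → (∫ t in a..b, ⟪v t - p t, w t⟫) = 0) →
            (⨆ t : Icc a b, ‖p (t : ℝ)‖) ≤ C * ⨆ t : Icc a b, ‖v (t : ℝ)‖ := by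
  obtain ⟨C, hC, hbound⟩ := exists_norm_le_of_thomee_unitInterval H q
  refine ⟨C, hC, fun a b hab v hv p hp hpb horth => ?_⟩
  have hba : b - a ≠ 0 := sub_ne_zero.2 hab.ne'
  have hmaps : MapsTo (fun s => a + (b - a) * s) (Icc 0 1) (Icc a b) := fun s hs =>
    ⟨by nlinarith [hs.1], by nlinarith [hs.2]⟩
  have hbdd : BddAbove (range fun t : Icc a b => ‖v t‖) :=
    (isCompact_Icc.image_of_continuousOn hv.norm).bddAbove.mono (by
      rintro _ ⟨t, rfl⟩
      exact ⟨t, t.2, rfl⟩)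
  have : Nonempty (Icc a b) := (nonempty_Icc.2 hab.le).to_subtype
  refine ciSup_le fun ⟨t, ht⟩ => ?_
  have hst : (t - a) / (b - a) ∈ Icc (0 : ℝ) 1 := ⟨div_nonneg (by linarith [ht.1]) (by linarith),
    (div_le_one (by linarith)).2 (by linarith [ht.2])⟩
  have key := hbound (fun s => v (a + (b - a) * s)) (fun s => p (a + (b - a) * s))
    (hv.comp (by fun_prop) hmaps) (hp.comp_affine a (b - a)) (by simpa using hpb)
    (fun j hj h => integral_inner_pow_smul_comp_affine_eq_zero hab.ne horth hj h) _
    (fun s hs => le_ciSup hbdd ⟨_, hmaps hs⟩) _ hst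
  simpa [mul_div_cancel₀ _ hba] using key

/-- **Stability of the Thomée projection in the `L^∞` norm.** There is a constant `C > 0`
depending only on `q` such that for all `a < b`, every continuous `v : [a,b] → H`, and every
polynomial `p` of degree at most `q` with `p(b) = v(b)` and `v − p` `L²`-orthogonal to all
polynomials of degree at most `q − 1`, one has
`sup_{t ∈ [a,b]} ‖p(t)‖ ≤ C sup_{t ∈ [a,b]} ‖v(t)‖`. -/
theorem thomee_projection_stability (H : Type*) [NormedAddCommGroup H]
    [InnerProductSpace ℝ H] [CompleteSpace H] (q : ℕ) :
    ∃ C : ℝ, 0 < C ∧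
      ∀ (a b : ℝ), a < b →
        ∀ v : ℝ → H, ContinuousOn v (Icc a b) →
          ∀ p : ℝ → H, IsPolyDegLE H q p → p b = v b →
            (∀ w : ℝ → H, IsPolyDegLT H q w → (∫ t in a..b, ⟪v t - p t, w t⟫) = 0) →
            (⨆ t : Icc a b, ‖p (t : ℝ)‖) ≤ C * ⨆ t : Icc a b, ‖v (t : ℝ)‖ :=
  thomee_projection_stability_general H q
end
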